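/- Let n ≥ 2 be an integer, F a field, and u = (u₁,…,uₙ) an orthogonal basis of an inner product space V of rank n over F. Let v₁ = a₁u₁ + ⋯ + aₙuₙ with a₁,…,aₙ ∈ F. If for every r with 2 ≤ r ≤ n the partial linear combination v₁^(r) = a₁u₁ + ⋯ + a_r u_r is anisotropic, then v₁ can be extended to an orthogonal basis v = (v₁,…,vₙ) of V with u ≈_F v. -/

import Mathlib

open Function TensorProduct

/-- `(V, B)` is an inner product space over the commutative ring `R`: `V` is a
finite rank free `R`-module and `B` is a non-degenerate symmetric bilinear form on `V`
(non-degenerate: the induced map `V → Hom_R(V, R)` is bijective). -/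
structure IsInnerProductSpace (R : Type*) [CommRing R] (V : Type*) [AddCommGroup V]
    [Module R V] (B : LinearMap.BilinForm R V) : Prop where
  free : Module.Free R V
  finite : Module.Finite R V
  symm : ∀ x y, B x y = B y x
  nondegenerate : Function.Bijective B

section IPSDefs

variable {R : Type*} [CommRing R] {V : Type*} [AddCommGroup V] [Module R V]

/-- A basis `b` of `V` is an orthogonal basis for the bilinear form `B` if
`B (b i) (b j) = 0` for all `i ≠ j`. -/
def IsOrthoBasis {n : ℕ} (B : LinearMap.BilinForm R V) (b : Module.Basis (Fin n) R V) : Prop :=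
  ∀ i j, i ≠ j → B (b i) (b j) = 0

/-- Two orthogonal bases `b`, `c` of `V` are chain equivalent if there is a sequence
`s 0, …, s r` of orthogonal bases of `V` with `s 0 = b`, `s r = c` and consecutive
bases sharing at least `n - 2` basis vectors. -/
def ChainEquiv {n : ℕ} (B : LinearMap.BilinForm R V) (b c : Module.Basis (Fin n) R V) : Prop :=
  ∃ (r : ℕ) (s : Fin (r + 1) → Module.Basis (Fin n) R V),
    (∀ i, IsOrthoBasis B (s i)) ∧ s 0 = b ∧ s (Fin.last r) = c ∧
    ∀ i : Fin r, n - 2 ≤ (Set.range (s i.castSucc) ∩ Set.range (s i.succ)).ncard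

end IPSDefs

section Aux

variable {F : Type*} [Field F] {V : Type*} [AddCommGroup V] [Module F V]
  {B : LinearMap.BilinForm F V} {n : ℕ}

lemma chainEquiv_trans {b c d : Module.Basis (Fin n) F V} (h1 : ChainEquiv B b c)
    (h2 : ChainEquiv B c d) : ChainEquiv B b d := by
  classical
  obtain ⟨r, s, hso, hs0, hsl, hsc⟩ := h1
  obtain ⟨r', s', hso', hs0', hsl', hsc'⟩ := h2
  let t : Fin (r + r' + 1) → Module.Basis (Fin n) F V := fun k =>
    if h : (k : ℕ) ≤ r then s ⟨(k : ℕ), by omega⟩ else s' ⟨(k : ℕ) - r, by omega⟩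
  have ht_le : ∀ (k : Fin (r + r' + 1)) (h : (k : ℕ) ≤ r),
      t k = s ⟨(k : ℕ), by omega⟩ := fun k h => dif_pos h
  have ht_gt : ∀ (k : Fin (r + r' + 1)) (h : ¬ (k : ℕ) ≤ r),
      t k = s' ⟨(k : ℕ) - r, by omega⟩ := fun k h => dif_neg h
  refine ⟨r + r', t, ?_, ?_, ?_, ?_⟩
  · intro k
    by_cases h : (k : ℕ) ≤ r
    · rw [ht_le k h]; exact hso _
    · rw [ht_gt k h]; exact hso' _
  · rw [ht_le 0 (by simp), ← hs0]
    exact congrArg s (Fin.ext (by simp))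
  · rcases Nat.eq_zero_or_pos r' with hr' | hr'
    · subst hr'
      have e1 : s ⟨((Fin.last (r + 0) : Fin (r + 0 + 1)) : ℕ), by omega⟩ = s (Fin.last r) :=
        congrArg s (Fin.ext (by simp [Fin.last]))
      rw [ht_le _ (by simp [Fin.last]), e1, hsl, ← hs0', ← hsl']
      exact congrArg s' (Fin.ext (by simp [Fin.last]))
    · rw [ht_gt _ (by simp [Fin.last]; omega), ← hsl']
      exact congrArg s' (Fin.ext (by simp [Fin.last]))
  · intro i
    have hc : ((i.castSucc : Fin (r + r' + 1)) : ℕ) = (i : ℕ) := rfl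
    have hsv : ((i.succ : Fin (r + r' + 1)) : ℕ) = (i : ℕ) + 1 := rfl
    rcases le_or_gt ((i : ℕ) + 1) r with h1 | h1
    · rw [ht_le _ (by omega : ((i.castSucc : Fin (r + r' + 1)) : ℕ) ≤ r),
        ht_le _ (by omega : ((i.succ : Fin (r + r' + 1)) : ℕ) ≤ r)]
      have e1 : s ⟨((i.castSucc : Fin (r + r' + 1)) : ℕ), by omega⟩
          = s ((⟨(i : ℕ), by omega⟩ : Fin r).castSucc) := congrArg s (Fin.ext (by simp [hc]))
      have e2 : s ⟨((i.succ : Fin (r + r' + 1)) : ℕ), by omega⟩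
          = s ((⟨(i : ℕ), by omega⟩ : Fin r).succ) := congrArg s (Fin.ext (by simp [hsv]))
      rw [e1, e2]
      exact hsc _
    · rcases le_or_gt ((i : ℕ)) r with h2 | h2
      · -- i = r, crossing point
        have hir : (i : ℕ) = r := by omega
        have hr' : 0 < r' := by have := i.isLt; omega
        rw [ht_le _ (by omega : ((i.castSucc : Fin (r + r' + 1)) : ℕ) ≤ r),
          ht_gt _ (by omega : ¬ ((i.succ : Fin (r + r' + 1)) : ℕ) ≤ r)]
        have e1 : s ⟨((i.castSucc : Fin (r + r' + 1)) : ℕ), by omega⟩ = s (Fin.last r) :=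
          congrArg s (Fin.ext (by simp [Fin.last, hc, hir]))
        have e0 : s' ((⟨0, hr'⟩ : Fin r').castSucc) = s' 0 := congrArg s' (Fin.ext (by simp))
        have e2 : s' ⟨((i.succ : Fin (r + r' + 1)) : ℕ) - r, by omega⟩
            = s' ((⟨0, hr'⟩ : Fin r').succ) := congrArg s' (Fin.ext (by simp [hsv, hir]))
        rw [e1, hsl, ← hs0', ← e0, e2]
        exact hsc' _
      · have hm : (i : ℕ) - r < r' := by have := i.isLt; omega
        rw [ht_gt _ (by omega : ¬ ((i.castSucc : Fin (r + r' + 1)) : ℕ) ≤ r),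
          ht_gt _ (by omega : ¬ ((i.succ : Fin (r + r' + 1)) : ℕ) ≤ r)]
        have e1 : s' ⟨((i.castSucc : Fin (r + r' + 1)) : ℕ) - r, by omega⟩
            = s' ((⟨(i : ℕ) - r, hm⟩ : Fin r').castSucc) := congrArg s' (Fin.ext (by simp [hc]))
        have e2 : s' ⟨((i.succ : Fin (r + r' + 1)) : ℕ) - r, by omega⟩
            = s' ((⟨(i : ℕ) - r, hm⟩ : Fin r').succ) :=
          congrArg s' (Fin.ext (by simp [hsv]; omega))
        rw [e1, e2]
        exact hsc' _

lemma step_lemma (hB : IsInnerProductSpace F V B) (b : Module.Basis (Fin n) F V)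
    (hb : IsOrthoBasis B b) (i j : Fin n) (hij : i ≠ j) (c d : F)
    (hw : B (c • b i + d • b j) (c • b i + d • b j) ≠ 0) :
    ∃ v : Module.Basis (Fin n) F V, IsOrthoBasis B v ∧ v i = c • b i + d • b j ∧
      (∀ k, k ≠ i → k ≠ j → v k = b k) ∧ ChainEquiv B b v := by
  classical
  haveI : Module.Finite F V := hB.finite
  have hnd : B.Nondegenerate := by
    have hL : LinearMap.SeparatingLeft B := by
      intro m hm
      apply hB.nondegenerate.injective
      ext x
      simp [hm x]
    exact ⟨hL, fun y hy => hL y fun x => by rw [hB.symm]; exact hy x⟩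
  have hbo : B.iIsOrtho b := LinearMap.BilinForm.iIsOrtho_def.2 hb
  have hbi : ∀ k, B (b k) (b k) ≠ 0 := fun k =>
    hbo.not_isOrtho_basis_self_of_nondegenerate hnd k
  set qi := B (b i) (b i) with hqi
  set qj := B (b j) (b j) with hqj
  set w : V := c • b i + d • b j with hwdef
  set w' : V := (d * qj) • b i - (c * qi) • b j with hw'def
  have hBij : B (b i) (b j) = 0 := hb i j hij
  have hBji : B (b j) (b i) = 0 := hb j i hij.symm
  have hQ : B w w = c * c * qi + d * d * qj := by
    simp [hwdef, hBij, hBji, ← hqi, ← hqj]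
    ring
  have hww' : B w w' = 0 := by
    simp [hwdef, hw'def, hBij, hBji, ← hqi, ← hqj]
    ring
  have hw'w : B w' w = 0 := by rw [hB.symm, hww']
  have hw'w' : B w' w' = qi * qj * B w w := by
    rw [hQ]
    simp [hw'def, hBij, hBji, ← hqi, ← hqj]
    ring
  have hw'ne : B w' w' ≠ 0 := by
    rw [hw'w']
    exact mul_ne_zero (mul_ne_zero (hbi i) (hbi j)) hw
  set f : Fin n → V := fun k => if k = i then w else if k = j then w' else b k with hf
  have hfi : f i = w := by simp [hf]
  have hfj : f j = w' := by simp [hf, hij.symm]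
  have hfk : ∀ k, k ≠ i → k ≠ j → f k = b k := by
    intro k h1 h2; simp [hf, h1, h2]
  have hwb : ∀ l, l ≠ i → l ≠ j → B w (b l) = 0 := by
    intro l h1 h2
    simp [hwdef, hb i l (Ne.symm h1), hb j l (Ne.symm h2)]
  have hw'b : ∀ l, l ≠ i → l ≠ j → B w' (b l) = 0 := by
    intro l h1 h2
    simp [hw'def, hb i l (Ne.symm h1), hb j l (Ne.symm h2)]
  have hfo : B.iIsOrtho f := by
    rw [LinearMap.BilinForm.iIsOrtho_def]
    intro k l hkl
    rcases eq_or_ne k i with rfl | hki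
    · rw [hfi]
      rcases eq_or_ne l j with rfl | hlj
      · rw [hfj]; exact hww'
      · rw [hfk l (Ne.symm hkl) hlj]; exact hwb l (Ne.symm hkl) hlj
    · rcases eq_or_ne k j with rfl | hkj
      · rw [hfj]
        rcases eq_or_ne l i with rfl | hli
        · rw [hfi]; exact hw'w
        · rw [hfk l hli (Ne.symm hkl)]; exact hw'b l hli (Ne.symm hkl)
      · rw [hfk k hki hkj]
        rcases eq_or_ne l i with rfl | hli
        · rw [hfi, hB.symm]; exact hwb k hki hkj
        · rcases eq_or_ne l j with rfl | hlj
          · rw [hfj, hB.symm]; exact hw'b k hki hkj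
          · rw [hfk l hli hlj]; exact hb k l hkl
  have hfan : ∀ k, ¬ B.IsOrtho (f k) (f k) := by
    intro k
    rcases eq_or_ne k i with rfl | hki
    · rw [hfi]; exact hw
    · rcases eq_or_ne k j with rfl | hkj
      · rw [hfj]; exact hw'ne
      · rw [hfk k hki hkj]; exact hbi k
  have hli : LinearIndependent F f :=
    LinearMap.BilinForm.linearIndependent_of_iIsOrtho hfo hfan
  haveI : Nonempty (Fin n) := ⟨i⟩
  have hcard : Fintype.card (Fin n) = Module.finrank F V := by
    rw [Module.finrank_eq_card_basis b]
  let v : Module.Basis (Fin n) F V := basisOfLinearIndependentOfCardEqFinrank hli hcard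
  have hv : ∀ k, v k = f k := fun k => by
    simp [v, coe_basisOfLinearIndependentOfCardEqFinrank]
  have hvo : IsOrthoBasis B v := by
    intro k l hkl
    rw [hv, hv]
    exact LinearMap.BilinForm.iIsOrtho_def.1 hfo k l hkl
  refine ⟨v, hvo, by rw [hv, hfi], fun k h1 h2 => by rw [hv, hfk k h1 h2], ?_⟩
  -- chain equivalence in one step
  refine ⟨1, ![b, v], ?_, rfl, rfl, ?_⟩
  · intro k
    fin_cases k
    · exact hb
    · exact hvo
  · intro k
    fin_cases k
    have hsub : b '' {l | l ≠ i ∧ l ≠ j} ⊆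
        Set.range (![b, v] (Fin.castSucc 0)) ∩ Set.range (![b, v] (Fin.succ 0)) := by
      rintro x ⟨l, ⟨hl1, hl2⟩, rfl⟩
      constructor
      · exact ⟨l, rfl⟩
      · exact ⟨l, by rw [show ![b, v] (Fin.succ 0) = v from rfl, hv l, hfk l hl1 hl2]⟩
    have hfin : (Set.range (![b, v] (Fin.castSucc 0)) ∩
        Set.range (![b, v] (Fin.succ 0))).Finite :=
      (Set.finite_range _).inter_of_left _
    have hcard2 : (b '' {l | l ≠ i ∧ l ≠ j}).ncard = n - 2 := by
      rw [Set.ncard_image_of_injective _ b.injective]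
      have : {l : Fin n | l ≠ i ∧ l ≠ j} = ↑(({i, j}ᶜ : Finset (Fin n))) := by
        ext l; simp [and_comm]
      rw [this, Set.ncard_coe_finset, Finset.card_compl, Fintype.card_fin,
        Finset.card_insert_of_notMem (by simp [hij]), Finset.card_singleton]
    calc n - 2 = (b '' {l | l ≠ i ∧ l ≠ j}).ncard := hcard2.symm
      _ ≤ _ := Set.ncard_le_ncard hsub hfin

lemma sum_filter_succ (u : Fin n → V) (a : Fin n → F) {r : ℕ} (hr : r < n) :
    ∑ i ∈ Finset.univ.filter (fun i : Fin n => (i : ℕ) < r + 1), a i • u i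
      = (∑ i ∈ Finset.univ.filter (fun i : Fin n => (i : ℕ) < r), a i • u i)
        + a ⟨r, hr⟩ • u ⟨r, hr⟩ := by
  have h : Finset.univ.filter (fun i : Fin n => (i : ℕ) < r + 1)
      = insert ⟨r, hr⟩ (Finset.univ.filter (fun i : Fin n => (i : ℕ) < r)) := by
    ext k
    simp only [Finset.mem_filter, Finset.mem_univ, true_and, Finset.mem_insert, Fin.ext_iff]
    omega
  rw [h, Finset.sum_insert (by simp), add_comm]

end Aux

/-- Let `F` be a field and `u = (u₁, …, uₙ)` an orthogonal basis of an inner product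
space `(V, B)` of rank `n ≥ 2` over `F`.  Let `v₁ = a₁ u₁ + ⋯ + aₙ uₙ`.  If every partial
linear combination `a₁ u₁ + ⋯ + a_r u_r` (for `2 ≤ r ≤ n`) is anisotropic, then `v₁`
extends to an orthogonal basis `v` of `V` that is chain equivalent to `u`. -/
theorem extend_to_orthoBasis_chainEquiv {F : Type*} [Field F]
    {V : Type*} [AddCommGroup V] [Module F V] (B : LinearMap.BilinForm F V)
    (hB : IsInnerProductSpace F V B) {n : ℕ} (hn : 2 ≤ n)
    (u : Module.Basis (Fin n) F V) (hu : IsOrthoBasis B u) (a : Fin n → F)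
    (haniso : ∀ r : ℕ, 2 ≤ r → r ≤ n →
      B (∑ i ∈ Finset.univ.filter (fun i : Fin n => (i : ℕ) < r), a i • u i)
        (∑ i ∈ Finset.univ.filter (fun i : Fin n => (i : ℕ) < r), a i • u i) ≠ 0) :
    ∃ v : Module.Basis (Fin n) F V, IsOrthoBasis B v ∧
      v ⟨0, by omega⟩ = ∑ i, a i • u i ∧ ChainEquiv B u v := by
  have key : ∀ r : ℕ, 2 ≤ r → r ≤ n → ∃ v : Module.Basis (Fin n) F V, IsOrthoBasis B v ∧
      v ⟨0, by omega⟩ = ∑ i ∈ Finset.univ.filter (fun i : Fin n => (i : ℕ) < r), a i • u i ∧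
      (∀ k : Fin n, r ≤ (k : ℕ) → v k = u k) ∧ ChainEquiv B u v := by
    intro r hr2
    induction r, hr2 using Nat.le_induction with
    | base =>
      intro h2n
      have hne : (⟨0, by omega⟩ : Fin n) ≠ ⟨1, by omega⟩ :=
        Fin.ne_of_val_ne (show (0 : ℕ) ≠ 1 by omega)
      have hfil : Finset.univ.filter (fun i : Fin n => (i : ℕ) < 2)
          = {(⟨0, by omega⟩ : Fin n), ⟨1, by omega⟩} := by
        ext k
        simp only [Finset.mem_filter, Finset.mem_univ, true_and, Finset.mem_insert,
          Finset.mem_singleton, Fin.ext_iff, Fin.val_mk]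
        omega
      have e2 : ∑ i ∈ Finset.univ.filter (fun i : Fin n => (i : ℕ) < 2), a i • u i
          = a ⟨0, by omega⟩ • u ⟨0, by omega⟩ + a ⟨1, by omega⟩ • u ⟨1, by omega⟩ := by
        rw [hfil, Finset.sum_insert (by simp [Fin.ext_iff, Fin.val_mk]), Finset.sum_singleton]
      have hw : B (a (⟨0, by omega⟩ : Fin n) • u ⟨0, by omega⟩ + a ⟨1, by omega⟩ • u ⟨1, by omega⟩)
          (a (⟨0, by omega⟩ : Fin n) • u ⟨0, by omega⟩ + a ⟨1, by omega⟩ • u ⟨1, by omega⟩) ≠ 0 := by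
        rw [← e2]; exact haniso 2 le_rfl h2n
      obtain ⟨v, hvo, hvi, hvk, hch⟩ := step_lemma hB u hu ⟨0, by omega⟩ ⟨1, by omega⟩ hne _ _ hw
      refine ⟨v, hvo, by rw [hvi, e2], fun k hk => hvk k ?_ ?_, hch⟩
      · exact Fin.ne_of_val_ne (show (k : ℕ) ≠ 0 by omega)
      · exact Fin.ne_of_val_ne (show (k : ℕ) ≠ 1 by omega)
    | succ r hr ih =>
      intro hrn
      obtain ⟨v, hvo, hv0, hvk, hch⟩ := ih (by omega)
      have hne : (⟨0, by omega⟩ : Fin n) ≠ ⟨r, by omega⟩ :=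
        Fin.ne_of_val_ne (show (0 : ℕ) ≠ r by omega)
      have e : (1 : F) • v ⟨0, by omega⟩ + a ⟨r, by omega⟩ • v ⟨r, by omega⟩
          = ∑ i ∈ Finset.univ.filter (fun i : Fin n => (i : ℕ) < r + 1), a i • u i := by
        rw [sum_filter_succ u a (show r < n by omega), one_smul, hv0,
          hvk ⟨r, by omega⟩ le_rfl]
      have hw : B ((1 : F) • v ⟨0, by omega⟩ + a ⟨r, by omega⟩ • v ⟨r, by omega⟩)
          ((1 : F) • v ⟨0, by omega⟩ + a ⟨r, by omega⟩ • v ⟨r, by omega⟩) ≠ 0 := by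
        rw [e]; exact haniso (r + 1) (by omega) hrn
      obtain ⟨v', hv'o, hv'i, hv'k, hch2⟩ :=
        step_lemma hB v hvo ⟨0, by omega⟩ ⟨r, by omega⟩ hne 1 (a ⟨r, by omega⟩) hw
      refine ⟨v', hv'o, by rw [hv'i, e], fun k hk => ?_, chainEquiv_trans hch hch2⟩
      rw [hv'k k (Fin.ne_of_val_ne (show (k : ℕ) ≠ 0 by omega))
        (Fin.ne_of_val_ne (show (k : ℕ) ≠ r by omega)), hvk k (by omega)]
  obtain ⟨v, h1, h2, _, h4⟩ := key n hn le_rfl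
  refine ⟨v, h1, ?_, h4⟩
  rw [h2]
  congr 1
  apply Finset.filter_true_of_mem
  intro i _
  exact i.isLt
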